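/- Let Λ and Λ' be lattices in R^2 with obtuse superbases B = (v_0,v_1,v_2), B' = (u_0,u_1,u_2) whose vectors all have length at most l and satisfy |u_i - v_i| ≤ δ for i=0,1,2. Then for every pair (i,j), the root products r_{ij} = √(-v_i·v_j) and s_{ij} = √(-u_i·u_j) satisfy |r_{ij} - s_{ij}| ≤ √(2lδ); consequently max over all pairs (i,j) of |r_{ij} - s_{ij}| ≤ √(2lδ). -/
import Mathlib

open RealInnerProductSpace

lemma sqrt_sub_sqrt_abs_le (a b c : ℝ) (ha : 0 ≤ a) (hb : 0 ≤ b)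
    (h : |a - b| ≤ c) : |Real.sqrt a - Real.sqrt b| ≤ Real.sqrt c := by
  set sa := Real.sqrt a
  set sb := Real.sqrt b
  have hsa : sa ^ 2 = a := Real.sq_sqrt ha
  have hsb : sb ^ 2 = b := Real.sq_sqrt hb
  have hsa0 : 0 ≤ sa := Real.sqrt_nonneg a
  have hsb0 : 0 ≤ sb := Real.sqrt_nonneg b
  have key : (sa - sb) ^ 2 ≤ c := by
    have h1 : |sa - sb| ≤ sa + sb := by
      cases abs_cases (sa - sb) with
      | inl h' => rw [h'.1]; linarith
      | inr h' => rw [h'.1]; linarith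
    have h2 : |a - b| = |sa - sb| * (sa + sb) := by
      rw [← hsa, ← hsb]
      have : sa ^ 2 - sb ^ 2 = (sa - sb) * (sa + sb) := by ring
      rw [this, abs_mul, abs_of_nonneg (by linarith : (0:ℝ) ≤ sa + sb)]
    nlinarith [sq_abs (sa - sb), abs_nonneg (sa - sb)]
  calc |sa - sb| = Real.sqrt ((sa - sb) ^ 2) := (Real.sqrt_sq_eq_abs _).symm
    _ ≤ Real.sqrt c := Real.sqrt_le_sqrt key

/-- Continuity of all root products of close obtuse superbases. -/
theorem root_forms_close_of_superbases_close
    (v u : Fin 3 → EuclideanSpace ℝ (Fin 2)) (l δ : ℝ)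
    (hvsum : v 0 + v 1 + v 2 = 0) (husum : u 0 + u 1 + u 2 = 0)
    (hvobt : ∀ i j : Fin 3, i ≠ j → ⟪v i, v j⟫ ≤ 0)
    (huobt : ∀ i j : Fin 3, i ≠ j → ⟪u i, u j⟫ ≤ 0)
    (hvl : ∀ i, ‖v i‖ ≤ l) (hul : ∀ i, ‖u i‖ ≤ l)
    (hδ : ∀ i, ‖u i - v i‖ ≤ δ) :
    ∀ i j : Fin 3, i ≠ j →
      |Real.sqrt (-⟪v i, v j⟫) - Real.sqrt (-⟪u i, u j⟫)| ≤ Real.sqrt (2 * l * δ) := by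
  intro i j hij
  have hvi0 : 0 ≤ ‖v i‖ := norm_nonneg _
  have hl : 0 ≤ l := le_trans hvi0 (hvl i)
  have hd : 0 ≤ δ := le_trans (norm_nonneg _) (hδ i)
  apply sqrt_sub_sqrt_abs_le _ _ _ (by linarith [hvobt i j hij]) (by linarith [huobt i j hij])
  have hdiff : ⟪v i, v j⟫ - ⟪u i, u j⟫ = ⟪v i, v j - u j⟫ + ⟪v i - u i, u j⟫ := by
    rw [inner_sub_right, inner_sub_left]; ring
  have h1 : |⟪v i, v j - u j⟫| ≤ l * δ := by
    calc |⟪v i, v j - u j⟫| ≤ ‖v i‖ * ‖v j - u j‖ := abs_real_inner_le_norm _ _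
      _ ≤ l * δ := by
        have := hδ j
        rw [← norm_neg (u j - v j), neg_sub] at this
        exact mul_le_mul (hvl i) this (norm_nonneg _) hl
  have h2 : |⟪v i - u i, u j⟫| ≤ l * δ := by
    calc |⟪v i - u i, u j⟫| ≤ ‖v i - u i‖ * ‖u j‖ := abs_real_inner_le_norm _ _
      _ ≤ δ * l := by
        have := hδ i
        rw [← norm_neg (u i - v i), neg_sub] at this
        exact mul_le_mul this (hul j) (norm_nonneg _) hd
      _ = l * δ := by ring
  have : |-⟪v i, v j⟫ - -⟪u i, u j⟫| = |⟪v i, v j⟫ - ⟪u i, u j⟫| := by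
    rw [← abs_neg]; ring_nf
  rw [this, hdiff]
  calc |⟪v i, v j - u j⟫ + ⟪v i - u i, u j⟫| ≤ _ + _ := abs_add_le _ _
    _ ≤ 2 * l * δ := by linarith
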